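/- If a Kripke model M with yesterday satisfies uniqueness of the past (every world has at most one ⇝-predecessor), then for each non-negative integer n, a world w satisfies D'_n = ⟨Y⟩^n [Y]⊥ if and only if depth(w) = n. -/
import Mathlib


structure KModel (Agt Prp W : Type) where
  rel : Agt → W → W → Prop
  yest : W → W → Prop
  val : Prp → W → Prop

structure AModel (Agt W E : Type) where
  rel : Agt → E → E → Prop
  yest : E → E → Prop
  pre : E → W → Prop

def hasChain {α : Type} (y : α → α → Prop) : ℕ → α → Prop
  | 0, _ => True
  | n + 1, w => ∃ v, y v w ∧ hasChain y n v

noncomputable def depth {α : Type} (y : α → α → Prop) (w : α) : ℕ∞ :=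
  sSup ((fun n : ℕ => (n : ℕ∞)) '' {n | hasChain y n w})

def DepthDef {α : Type} (y : α → α → Prop) : Prop := ∀ x, depth y x ≠ ⊤

def pastState {α : Type} (y : α → α → Prop) (s : α) : Prop := ¬ ∃ s', y s' s

def KnowPast {Agt α : Type} (r : Agt → α → α → Prop) (y : α → α → Prop) : Prop :=
  ∀ a w' w v, y w' w → r a w v → ∃ v', y v' v

def KnowInit {Agt α : Type} (r : Agt → α → α → Prop) (y : α → α → Prop) : Prop :=
  ∀ a w v, r a w v → pastState y w → pastState y v

def UniqPast {α : Type} (y : α → α → Prop) : Prop :=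
  ∀ w' w'' w, y w' w → y w'' w → w' = w''

def PerfRecall {Agt α : Type} (r : Agt → α → α → Prop) (y : α → α → Prop) : Prop :=
  ∀ a w' w v, y w' w → r a w v → ∃ v', r a w' v' ∧ y v' v

def Sync {Agt α : Type} (r : Agt → α → α → Prop) (y : α → α → Prop) : Prop :=
  DepthDef y ∧ ∀ a x x', r a x x' → depth y x = depth y x'

def EpiPast {Agt W E : Type} (U : AModel Agt W E) (s : E) : Prop :=
  pastState U.yest s ∧ (∀ w, U.pre s w) ∧
    ∀ a t, (U.rel a s t ↔ t = s) ∧ (U.rel a t s ↔ t = s)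

def HistPres {Agt W E : Type} (U : AModel Agt W E) : Prop :=
  (∀ s' s, U.yest s' s → ∀ w, U.pre s w → U.pre s' w) ∧
    ∀ s, pastState U.yest s → EpiPast U s

def pRel {Agt Prp W E : Type} (M : KModel Agt Prp W) (U : AModel Agt W E)
    (a : Agt) (p q : W × E) : Prop :=
  U.pre p.2 p.1 ∧ U.pre q.2 q.1 ∧ M.rel a p.1 q.1 ∧ U.rel a p.2 q.2

def pYest {Agt Prp W E : Type} (M : KModel Agt Prp W) (U : AModel Agt W E)
    (p q : W × E) : Prop :=
  U.pre p.2 p.1 ∧ U.pre q.2 q.1 ∧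
    ((M.yest p.1 q.1 ∧ p.2 = q.2 ∧ pastState U.yest q.2) ∨ (p.1 = q.1 ∧ U.yest p.2 q.2))

def prodM {Agt Prp W E : Type} (M : KModel Agt Prp W) (U : AModel Agt W E) :
    KModel Agt Prp (W × E) :=
  ⟨pRel M U, pYest M U, fun p q => M.val p q.1⟩

inductive Fm (Agt Prp : Type) : Type
  | bot : Fm Agt Prp
  | atom : Prp → Fm Agt Prp
  | neg : Fm Agt Prp → Fm Agt Prp
  | conj : Fm Agt Prp → Fm Agt Prp → Fm Agt Prp
  | box : Agt → Fm Agt Prp → Fm Agt Prp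
  | yest : Fm Agt Prp → Fm Agt Prp

def sat {Agt Prp W : Type} (M : KModel Agt Prp W) (w : W) : Fm Agt Prp → Prop
  | .bot => False
  | .atom p => M.val p w
  | .neg φ => ¬ sat M w φ
  | .conj φ ψ => sat M w φ ∧ sat M w ψ
  | .box a φ => ∀ v, M.rel a w v → sat M v φ
  | .yest φ => ∀ v, M.yest v w → sat M v φ

def Fm.diaY {Agt Prp : Type} (φ : Fm Agt Prp) : Fm Agt Prp := .neg (.yest (.neg φ))

def IsBisim {Agt Prp W W' : Type} (M : KModel Agt Prp W) (M' : KModel Agt Prp W')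
    (B : W → W' → Prop) : Prop :=
  (∃ w w', B w w') ∧
  ∀ w w', B w w' →
    (∀ p, M.val p w ↔ M'.val p w') ∧
    (∀ a v, M.rel a w v → ∃ v', M'.rel a w' v' ∧ B v v') ∧
    (∀ a v', M'.rel a w' v' → ∃ v, M.rel a w v ∧ B v v') ∧
    (∀ v, M.yest v w → ∃ v', M'.yest v' w' ∧ B v v') ∧
    (∀ v', M'.yest v' w' → ∃ v, M.yest v w ∧ B v v')
def Dfm' {Agt Prp : Type} (n : ℕ) : Fm Agt Prp := Fm.diaY^[n] (.yest .bot)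

lemma hasChain_anti {α : Type} (y : α → α → Prop) :
    ∀ n w, hasChain y (n + 1) w → hasChain y n w := by
  intro n
  induction n with
  | zero => intro w _; trivial
  | succ m ih =>
    rintro w ⟨v, hv, hc⟩
    exact ⟨v, hv, ih v hc⟩

lemma hasChain_anti' {α : Type} (y : α → α → Prop) {m n : ℕ} (h : m ≤ n) :
    ∀ w, hasChain y n w → hasChain y m w := by
  induction h with
  | refl => intro w hw; exact hw
  | step _ ih => intro w hw; exact ih w (hasChain_anti y _ w hw)

lemma depth_eq_iff {α : Type} (y : α → α → Prop) (w : α) (n : ℕ) :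
    depth y w = (n : ℕ∞) ↔ hasChain y n w ∧ ¬ hasChain y (n + 1) w := by
  constructor
  · intro h
    constructor
    · by_contra hn
      have hlt : ∀ m ∈ {m | hasChain y m w}, (m : ℕ∞) ≤ ((n - 1 : ℕ) : ℕ∞) := by
        intro m hm
        have hmn : m < n := by
          by_contra hge
          exact hn (hasChain_anti' y (Nat.le_of_not_lt hge) w hm)
        have hn0 : 1 ≤ n := Nat.one_le_iff_ne_zero.mpr (by
          rintro rfl; exact absurd hmn (Nat.not_lt_zero m))
        exact Nat.cast_le.mpr (Nat.le_sub_one_of_lt hmn)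
      have hsup : depth y w ≤ ((n - 1 : ℕ) : ℕ∞) := by
        apply sSup_le
        rintro x ⟨m, hm, rfl⟩
        exact hlt m hm
      rw [h] at hsup
      have hn0 : n ≠ 0 := by
        rintro rfl; exact hn trivial
      have : n ≤ n - 1 := Nat.cast_le.mp hsup
      omega
    · intro hc
      have : ((n + 1 : ℕ) : ℕ∞) ≤ depth y w := le_sSup ⟨n + 1, hc, rfl⟩
      rw [h] at this
      have : (n + 1 : ℕ) ≤ n := Nat.cast_le.mp (by exact_mod_cast this)
      omega
  · rintro ⟨h1, h2⟩
    apply le_antisymm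
    · apply sSup_le
      rintro x ⟨m, hm, rfl⟩
      apply Nat.cast_le.mpr
      by_contra hge
      exact h2 (hasChain_anti' y (Nat.succ_le_of_lt (Nat.lt_of_not_le hge)) w hm)
    · exact le_sSup ⟨n, h1, rfl⟩

lemma sat_Dfm'_iff {Agt Prp W : Type} (M : KModel Agt Prp W) (hup : UniqPast M.yest) :
    ∀ (n : ℕ) (w : W), sat M w (Dfm' (Agt := Agt) (Prp := Prp) n) ↔
      hasChain M.yest n w ∧ ¬ hasChain M.yest (n + 1) w := by
  intro n
  induction n with
  | zero =>
    intro w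
    simp only [Dfm', Function.iterate_zero, id_eq, sat, hasChain]
    constructor
    · intro h
      refine ⟨trivial, ?_⟩
      rintro ⟨v, hv, -⟩
      exact h v hv
    · rintro ⟨-, h⟩ v hv
      exact h ⟨v, hv, trivial⟩
  | succ m ih =>
    intro w
    have hrw : (Dfm' (Agt := Agt) (Prp := Prp) (m + 1)) = Fm.diaY (Dfm' m) := by
      simp [Dfm', Function.iterate_succ_apply']
    rw [hrw]
    simp only [Fm.diaY, sat]
    constructor
    · intro h
      push_neg at h
      obtain ⟨v, hv, hsat⟩ := h
      obtain ⟨hc, hnc⟩ := (ih v).mp hsat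
      refine ⟨⟨v, hv, hc⟩, ?_⟩
      rintro ⟨u, hu, hcu⟩
      rw [hup u v w hu hv] at hcu
      exact hnc hcu
    · rintro ⟨⟨v, hv, hc⟩, hnc⟩ hall
      have hncv : ¬ hasChain M.yest (m + 1) v := fun h => hnc ⟨v, hv, h⟩
      exact hall v hv ((ih v).mpr ⟨hc, hncv⟩)

theorem stmt1 {Agt Prp W : Type} (M : KModel Agt Prp W) (hup : UniqPast M.yest)
    (w : W) (n : ℕ) :
    sat M w (Dfm' n) ↔ depth M.yest w = (n : ℕ∞) := by
  rw [sat_Dfm'_iff M hup n w, depth_eq_iff]
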